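/- Let S be a set of states with functions eff : M × S → S, yld : M × S → {T, F, M⊥, B}, act : M × S → Act∪{τ} satisfying: (1) for all m, if some state s has yld(m,s) = M⊥ then no state s' has yld(m,s') ∈ {T, F}; (2) there exists a state s₀ such that for all m, yld(m,s₀) = B and for all s', yld(m,s') = B implies eff(m,s') = s₀; (3) for all m, s, yld(m,s) ≠ M⊥ ↔ act(m,s) = τ. Define the cumulative effect ceff_s by ceff_s([]) = s and ceff_s(σ ++ [m]) = eff(m, ceff_s(σ)), and define H_s by H_s.ρ(σ ++ [m]) = yld(m, ceff_s(σ)) and H_s.α(σ ++ [m]) = act(m, ceff_s(σ)). Then for every s ∈ S, H_s is a para-target service. -/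
import Mathlib


/-- Possible replies of a service: true, false, meaningless, blocked. -/
inductive Reply : Type
  | T | F | Mless | B
deriving DecidableEq

/-- A para-target service: a reply function `rho` and an action function `act`
(on nonempty method sequences; `none` represents the internal action τ),
satisfying the three para-target conditions. -/
structure ParaTarget (M A : Type) where
  rho : List M → Reply
  act : List M → Option A
  cond1 : ∀ m : M, (∃ σ : List M, rho (σ ++ [m]) = Reply.Mless) →
    ∀ σ' : List M, rho (σ' ++ [m]) ≠ Reply.T ∧ rho (σ' ++ [m]) ≠ Reply.F
  cond2 : ∀ (σ : List M) (m : M), σ ≠ [] → rho σ = Reply.B → rho (σ ++ [m]) = Reply.B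
  cond3 : ∀ σ : List M, σ ≠ [] → (rho σ ≠ Reply.Mless ↔ act σ = none)

/-- Cumulative effect function: `ceff s [] = s`, `ceff s (σ ++ [m]) = eff m (ceff s σ)`. -/
def ceff {M S : Type} (eff : M → S → S) (s : S) (σ : List M) : S :=
  σ.foldl (fun t m => eff m t) s

/-- Reply function of the para-target service `H_s` induced by a state-based
description: `H_s.ρ (σ ++ [m]) = yld m (ceff s σ)` (arbitrary value `B` on `[]`). -/
def Hrho {M S : Type} (eff : M → S → S) (yld : M → S → Reply) (s : S) (l : List M) : Reply :=
  match l.getLast? with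
  | none => Reply.B
  | some m => yld m (ceff eff s l.dropLast)

/-- Action function of the induced para-target service `H_s`:
`H_s.α (σ ++ [m]) = act m (ceff s σ)` (arbitrary value `none` on `[]`). -/
def Hact {M S A : Type} (eff : M → S → S) (act : M → S → Option A) (s : S) (l : List M) :
    Option A :=
  match l.getLast? with
  | none => none
  | some m => act m (ceff eff s l.dropLast)

lemma Hrho_append {M S : Type} (eff : M → S → S) (yld : M → S → Reply) (s : S)
    (σ : List M) (m : M) : Hrho eff yld s (σ ++ [m]) = yld m (ceff eff s σ) := by
  simp [Hrho, List.getLast?_append, List.dropLast_append_of_ne_nil]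

lemma Hact_append {M S A : Type} (eff : M → S → S) (act : M → S → Option A) (s : S)
    (σ : List M) (m : M) : Hact eff act s (σ ++ [m]) = act m (ceff eff s σ) := by
  simp [Hact, List.getLast?_append, List.dropLast_append_of_ne_nil]

/-- A state-based description `(S, eff, yld, act)` satisfying the three state-based
conditions induces, for every initial state `s`, a para-target service `H_s` with
`H_s.ρ (σ ++ [m]) = yld m (ceff s σ)` and `H_s.α (σ ++ [m]) = act m (ceff s σ)`. -/
theorem stateBased_isParaTarget {M S A : Type}
    (eff : M → S → S) (yld : M → S → Reply) (act : M → S → Option A)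
    (h1 : ∀ m : M, (∃ s : S, yld m s = Reply.Mless) →
      ∀ s' : S, yld m s' ≠ Reply.T ∧ yld m s' ≠ Reply.F)
    (h2 : ∃ s₀ : S, (∀ m : M, yld m s₀ = Reply.B) ∧
      ∀ (m : M) (s' : S), yld m s' = Reply.B → eff m s' = s₀)
    (h3 : ∀ (m : M) (s : S), yld m s ≠ Reply.Mless ↔ act m s = none) :
    ∀ s : S, ∃ H : ParaTarget M A,
      (∀ (σ : List M) (m : M), H.rho (σ ++ [m]) = yld m (ceff eff s σ)) ∧
      (∀ (σ : List M) (m : M), H.act (σ ++ [m]) = act m (ceff eff s σ)) := by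
  obtain ⟨s₀, hs₀B, hs₀eff⟩ := h2
  intro s
  refine ⟨⟨Hrho eff yld s, Hact eff act s, ?_, ?_, ?_⟩,
    fun σ m => Hrho_append eff yld s σ m, fun σ m => Hact_append eff act s σ m⟩
  · intro m ⟨σ, hσ⟩ σ'
    rw [Hrho_append] at hσ
    rw [Hrho_append]
    exact h1 m ⟨_, hσ⟩ _
  · intro σ m hne hB
    obtain rfl | ⟨σ', m', rfl⟩ := σ.eq_nil_or_concat
    · exact absurd rfl hne
    rw [List.concat_eq_append] at *
    rw [Hrho_append] at hB
    rw [Hrho_append]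
    have : ceff eff s (σ' ++ [m']) = s₀ := by
      simp [ceff, List.foldl_append]
      exact hs₀eff m' _ hB
    rw [this]
    exact hs₀B m
  · intro σ hne
    obtain rfl | ⟨σ', m', rfl⟩ := σ.eq_nil_or_concat
    · exact absurd rfl hne
    rw [List.concat_eq_append, Hrho_append, Hact_append]
    exact h3 m' _
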